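/- Axiom AxKhKh is valid: for any model M, state s, group G ⊆ I, and formula φ, if M,s ⊨ Kh_G Kh_G φ then M,s ⊨ Kh_G φ. -/

import Mathlib

namespace DKH

/-- Groups of agents: subsets of the finite agent set `I = {i_0, …, i_{n-1}}`. -/
abbrev Grp (n : ℕ) := Finset (Fin n)

/-- The language DKH: φ ::= ⊤ | p | ¬φ | (φ∧φ) | K_G φ | Kh_G φ. -/
inductive Formula (P : Type) (n : ℕ) : Type
  | top  : Formula P n
  | atom : P → Formula P n
  | neg  : Formula P n → Formula P n
  | and  : Formula P n → Formula P n → Formula P n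
  | K    : Grp n → Formula P n → Formula P n
  | Kh   : Grp n → Formula P n → Formula P n

instance {P n} : Inhabited (Formula P n) := ⟨.top⟩

namespace Formula
/-- Defined implication φ → ψ := ¬(φ ∧ ¬ψ). -/
def imp {P n} (φ ψ : Formula P n) : Formula P n := .neg (φ.and ψ.neg)
/-- Defined falsum ⊥ := ¬⊤. -/
def bot {P : Type} {n : ℕ} : Formula P n := .neg .top
end Formula

/-- A model ⟨S, {∼_i}, {A_G}, {→_a}, V⟩. -/
structure KhModel (P : Type) (n : ℕ) where
  State : Type
  Act : Type
  sim : Fin n → State → State → Prop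
  sim_equiv : ∀ i, Equivalence (sim i)
  A : Grp n → Set Act
  A_empty : A ∅ = ∅
  A_disj : ∀ G H : Grp n, G ⊂ H → A G ∩ A H = ∅
  tr : Act → State → State → Prop
  V : P → Set State

/-- Distributed indistinguishability: s ∼_G t iff s ∼_i t for every i ∈ G. -/
def gsim {P n} (M : KhModel P n) (G : Grp n) (s t : M.State) : Prop :=
  ∀ i ∈ G, M.sim i s t

/-- Distributed actions: atomic group actions, or joint tuples ⟨d_0,…,d_k⟩. -/
inductive DAct (Act : Type) : Type
  | atom : Act → DAct Act
  | joint : List (DAct Act) → DAct Act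

mutual
/-- Distributed transition relation: →_{⟨d_0,…,d_k⟩} = ⋂_j →_{d_j}. -/
def dtr {Act State : Type} (tr : Act → State → State → Prop) :
    DAct Act → State → State → Prop
  | .atom a, s, t => tr a s t
  | .joint ds, s, t => dtrList tr ds s t

def dtrList {Act State : Type} (tr : Act → State → State → Prop) :
    List (DAct Act) → State → State → Prop
  | [], _, _ => True
  | d :: ds, s, t => dtr tr d s t ∧ dtrList tr ds s t
end

/-- `Gs` is a partial partition of `G`: a family of nonempty, pairwise disjoint
blocks, all included in `G` (i.e. a partition of a subset of `G`). -/
def PartialPartition {n : ℕ} (G : Grp n) (Gs : List (Grp n)) : Prop :=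
  (∀ B ∈ Gs, B ≠ ∅) ∧ Gs.Pairwise (fun B C => Disjoint B C) ∧ (∀ B ∈ Gs, B ⊆ G)

/-- The fixed ordering on mutually disjoint nonempty groups: G ≺ H iff the
minimal index of an agent in G is below that of H. -/
def grpLt {n : ℕ} (B C : Grp n) : Prop := B.min < C.min

/-- Membership in the set A*_G of distributed actions of group G:
the closure of A^+_G = ⋃_{G'⊆G} A_{G'} under forming joint actions
⟨d_0,…,d_k⟩ ∈ A*_{G_0} × ⋯ × A*_{G_k} for non-trivial partial partitions
{G_0,…,G_k} of G listed in the fixed order ≺. -/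
inductive star {n : ℕ} {Act : Type} (A : Grp n → Set Act) : Grp n → DAct Act → Prop
  | base {G G' : Grp n} {a : Act} :
      G' ⊆ G → a ∈ A G' → star A G (.atom a)
  | joint {G : Grp n} {Gs : List (Grp n)} {ds : List (DAct Act)} :
      2 ≤ Gs.length → PartialPartition G Gs → Gs.Chain' grpLt →
      List.Forall₂ (star A) Gs ds → star A G (.joint ds)

/-- Membership in A^+_G = ⋃_{G'⊆G} A_{G'} (as a set of distributed actions). -/
def inAplus {n : ℕ} {Act : Type} (A : Grp n → Set Act) (G : Grp n) (d : DAct Act) : Prop :=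
  ∃ G' : Grp n, G' ⊆ G ∧ ∃ a ∈ A G', d = .atom a

/-- d is executable on X if every s ∈ X has a d-successor. -/
def ExecutableOn {P n} (M : KhModel P n) (d : DAct M.Act) (X : Set M.State) : Prop :=
  ∀ s ∈ X, ∃ t, dtr M.tr d s t

/-- A strategy of group G: a partial function from ∼_G-equivalence classes to
A*_G such that the prescribed action is executable on the class. -/
structure Strategy {P n} (M : KhModel P n) (G : Grp n) where
  act : M.State → Option (DAct M.Act)
  uniform : ∀ s t, gsim M G s t → act s = act t
  mem_star : ∀ s d, act s = some d → star M.A G d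
  exec : ∀ s d, act s = some d → ∀ t, gsim M G s t → ∃ u, dtr M.tr d t u

/-- One step of an execution: [s]_G →_{σ([s]_G)} [t]_G. -/
def stepRel {P n} {M : KhModel P n} {G : Grp n} (σ : Strategy M G) (s t : M.State) : Prop :=
  ∃ d, σ.act s = some d ∧ ∃ u v, gsim M G s u ∧ gsim M G t v ∧ dtr M.tr d u v

/-- Leaf-nodes of the finite complete executions of σ starting from [s]_G,
as a ∼_G-closed set of states. -/
def CELeaf {P n} {M : KhModel P n} {G : Grp n} (σ : Strategy M G) (s : M.State) :
    Set M.State :=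
  {t | ∃ (m : ℕ) (f : ℕ → M.State), gsim M G s (f 0) ∧
    (∀ j < m, stepRel σ (f j) (f (j+1))) ∧ σ.act (f m) = none ∧ gsim M G (f m) t}

/-- There is an infinite (hence complete) execution of σ starting from [s]_G. -/
def InfiniteFrom {P n} {M : KhModel P n} {G : Grp n} (σ : Strategy M G) (s : M.State) : Prop :=
  ∃ f : ℕ → M.State, gsim M G s (f 0) ∧ ∀ j, stepRel σ (f j) (f (j+1))

/-- Inner-nodes of the complete executions of σ starting from [s]_G,
as a ∼_G-closed set of states. -/
def CEInner {P n} {M : KhModel P n} {G : Grp n} (σ : Strategy M G) (s : M.State) :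
    Set M.State :=
  {t | (∃ (m : ℕ) (f : ℕ → M.State), gsim M G s (f 0) ∧
          (∀ j < m, stepRel σ (f j) (f (j+1))) ∧ σ.act (f m) = none ∧
          ∃ j < m, gsim M G (f j) t) ∨
       (∃ f : ℕ → M.State, gsim M G s (f 0) ∧
          (∀ j, stepRel σ (f j) (f (j+1))) ∧ ∃ j, gsim M G (f j) t)}

/-- Truth at a pointed model. -/
def Sat {P n} (M : KhModel P n) : M.State → Formula P n → Prop
  | _, .top => True
  | s, .atom p => s ∈ M.V p
  | s, .neg φ => ¬ Sat M s φ
  | s, .and φ ψ => Sat M s φ ∧ Sat M s ψ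
  | s, .K G φ => ∀ t, gsim M G s t → Sat M t φ
  | s, .Kh G φ => ∃ σ : Strategy M G,
      (∀ t ∈ CELeaf σ s, Sat M t φ) ∧ ¬ InfiniteFrom σ s

/-- Boolean evaluation treating ⊤, ¬, ∧ as connectives and everything else
as atoms; used to define propositional tautologies. -/
def beval {P n} (v : Formula P n → Bool) : Formula P n → Bool
  | .top => true
  | .atom p => v (.atom p)
  | .neg φ => !(beval v φ)
  | .and φ ψ => beval v φ && beval v ψ
  | .K G φ => v (.K G φ)
  | .Kh G φ => v (.Kh G φ)

/-- Instances of propositional tautologies. -/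
def IsTaut {P n} (φ : Formula P n) : Prop := ∀ v, beval v φ = true

/-- The proof system SDKH. -/
inductive Provable {P : Type} {n : ℕ} : Formula P n → Prop
  | taut {φ} : IsTaut φ → Provable φ
  | distK {G : Grp n} {φ ψ} :
      Provable (((Formula.K G φ).and (Formula.K G (φ.imp ψ))).imp (Formula.K G ψ))
  | axT {G : Grp n} {φ} : Provable ((Formula.K G φ).imp φ)
  | ax4 {G : Grp n} {φ} : Provable ((Formula.K G φ).imp (Formula.K G (Formula.K G φ)))
  | ax5 {G : Grp n} {φ} :
      Provable ((Formula.neg (Formula.K G φ)).imp (Formula.K G (Formula.neg (Formula.K G φ))))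
  | axKMono {G H : Grp n} {φ} : G ⊆ H → Provable ((Formula.K G φ).imp (Formula.K H φ))
  | axKhMono {G H : Grp n} {φ} : G ⊆ H → Provable ((Formula.Kh G φ).imp (Formula.Kh H φ))
  | axKtoKh {G : Grp n} {φ} : Provable ((Formula.K G φ).imp (Formula.Kh G φ))
  | axEmpKhtoK {φ} : Provable ((Formula.Kh ∅ φ).imp (Formula.K ∅ φ))
  | axKhtoKKh {G : Grp n} {φ} : Provable ((Formula.Kh G φ).imp (Formula.K G (Formula.Kh G φ)))
  | axEmpMono {G : Grp n} {φ ψ} :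
      Provable ((Formula.K ∅ (φ.imp ψ)).imp (Formula.K ∅ ((Formula.Kh G φ).imp (Formula.Kh G ψ))))
  | axKhbot {G : Grp n} : Provable ((Formula.Kh G Formula.bot).imp Formula.bot)
  | axKhtoKhK {G : Grp n} {φ} : Provable ((Formula.Kh G φ).imp (Formula.Kh G (Formula.K G φ)))
  | axKhKh {G : Grp n} {φ} : Provable ((Formula.Kh G (Formula.Kh G φ)).imp (Formula.Kh G φ))
  | mp {φ ψ} : Provable (φ.imp ψ) → Provable φ → Provable ψ
  | necK {G : Grp n} {φ} : Provable φ → Provable (Formula.K G φ)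

/-- Conjunction of a finite list of formulas. -/
def conj {P n} (L : List (Formula P n)) : Formula P n := L.foldr Formula.and Formula.top

/-- SDKH-consistency of a set of formulas. -/
def Consistent {P n} (X : Set (Formula P n)) : Prop :=
  ¬ ∃ L : List (Formula P n), (∀ φ ∈ L, φ ∈ X) ∧ Provable ((conj L).imp Formula.bot)

/-- Maximal consistent sets. -/
def MCS {P n} (X : Set (Formula P n)) : Prop :=
  Consistent X ∧ ∀ φ ∉ X, ¬ Consistent (insert φ X)

/-! ### The canonical model -/

/-- One step ⟨(φ,G),H⟩X of a mixed sequence. -/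
structure CStep (P : Type) (n : ℕ) where
  fml : Formula P n
  G : Grp n
  H : Grp n
  X : Set (Formula P n)

instance {P n} : Inhabited (CStep P n) := ⟨⟨.top, ∅, ∅, ∅⟩⟩

/-- The conditions on a mixed sequence X_0⟨(φ_1,G_1),H_1⟩X_1⋯⟨(φ_n,G_n),H_n⟩X_n
(the previous MCS being `X`). -/
def goodFrom {P n} : Set (Formula P n) → List (CStep P n) → Prop
  | _, [] => True
  | X, c :: rest =>
      MCS c.X ∧ c.G ≠ ∅ ∧ (Formula.Kh c.G c.fml) ∈ X ∧ (Formula.K c.G c.fml) ∈ c.X ∧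
      (∀ ψ, (Formula.K c.H ψ) ∈ X → ψ ∈ c.X) ∧ goodFrom c.X rest

/-- The final MCS `ed(s)` of a mixed sequence. -/
def edOf {P n} (X0 : Set (Formula P n)) (l : List (CStep P n)) : Set (Formula P n) :=
  l.foldl (fun _ c => c.X) X0

/-- States of the canonical model: mixed sequences starting at X_0. -/
def CState {P : Type} {n : ℕ} (X0 : Set (Formula P n)) := {l : List (CStep P n) // goodFrom X0 l}

/-- Canonical epistemic relation ∼^c_i. -/
def csim {P n} (X0 : Set (Formula P n)) (i : Fin n) (s t : CState X0) : Prop :=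
  ∃ k : ℕ, k ≤ s.1.length ∧ k ≤ t.1.length ∧
    (∀ j < k, (s.1.getD j default).X = (t.1.getD j default).X ∧
              (s.1.getD j default).H = (t.1.getD j default).H) ∧
    (∀ j, k ≤ j → j < s.1.length → i ∈ (s.1.getD j default).H) ∧
    (∀ j, k ≤ j → j < t.1.length → i ∈ (t.1.getD j default).H)

/-- Canonical atomic actions: pairs (φ, G). -/
abbrev CAct (P : Type) (n : ℕ) := Formula P n × Grp n

/-- Canonical atomic action sets A^c_G = {(φ,G) : φ ∈ DKH} for G ≠ ∅, A^c_∅ = ∅. -/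
def cA {P : Type} {n : ℕ} (G : Grp n) : Set (CAct P n) := {a | a.2 = G ∧ G ≠ ∅}

/-- Canonical transition: s →_{(φ,G)} t iff t = s⟨(φ,G),G'⟩X for some G' and MCS X. -/
def ctr {P n} (X0 : Set (Formula P n)) (a : CAct P n) (s t : CState X0) : Prop :=
  ∃ (G' : Grp n) (Y : Set (Formula P n)), MCS Y ∧ t.1 = s.1 ++ [⟨a.1, a.2, G', Y⟩]

theorem csim_equiv {P n} (X0 : Set (Formula P n)) (i : Fin n) : Equivalence (csim X0 i) := by
  constructor
  · intro s
    exact ⟨s.1.length, le_rfl, le_rfl, fun j _ => ⟨rfl, rfl⟩,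
      fun j h1 h2 => absurd h2 (by omega), fun j h1 h2 => absurd h2 (by omega)⟩
  · rintro s t ⟨k, h1, h2, h3, h4, h5⟩
    exact ⟨k, h2, h1, fun j hj => ⟨(h3 j hj).1.symm, (h3 j hj).2.symm⟩, h5, h4⟩
  · rintro s t u ⟨k1, hk1s, hk1t, heq1, hs1, ht1⟩ ⟨k2, hk2t, hk2u, heq2, ht2, hu2⟩
    refine ⟨min k1 k2, le_trans (min_le_left _ _) hk1s, le_trans (min_le_right _ _) hk2u,
      ?_, ?_, ?_⟩
    · intro j hj
      have e1 := heq1 j (lt_of_lt_of_le hj (min_le_left _ _))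
      have e2 := heq2 j (lt_of_lt_of_le hj (min_le_right _ _))
      exact ⟨e1.1.trans e2.1, e1.2.trans e2.2⟩
    · intro j hj hjs
      by_cases h : k1 ≤ j
      · exact hs1 j h hjs
      · have hj2 : k2 ≤ j := by omega
        have hjt : j < t.1.length := by omega
        have := ht2 j hj2 hjt
        have e := (heq1 j (by omega)).2
        rw [e]; exact this
    · intro j hj hju
      by_cases h : k2 ≤ j
      · exact hu2 j h hju
      · have hj1 : k1 ≤ j := by omega
        have hjt : j < t.1.length := by omega
        have := ht1 j hj1 hjt
        have e := (heq2 j (by omega)).2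
        rw [← e]; exact this

theorem cA_empty {P : Type} {n : ℕ} : (cA (P := P) (n := n) ∅) = ∅ := by
  ext a; simp [cA]

theorem cA_disj {P : Type} {n : ℕ} (G H : Grp n) (h : G ⊂ H) :
    cA (P := P) (n := n) G ∩ cA H = ∅ := by
  ext a
  simp only [Set.mem_inter_iff, Set.mem_empty_iff_false, iff_false, cA, Set.mem_setOf_eq]
  rintro ⟨⟨rfl, -⟩, ⟨h2, -⟩⟩
  exact h.ne h2

/-- The canonical model M^c(X_0). -/
def canonicalModel {P : Type} {n : ℕ} (X0 : Set (Formula P n)) : KhModel P n where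
  State := CState X0
  Act := CAct P n
  sim := csim X0
  sim_equiv := csim_equiv X0
  A := cA
  A_empty := cA_empty
  A_disj := cA_disj
  tr := ctr X0
  V := fun p => {s : CState X0 | Formula.atom p ∈ edOf X0 s.1}

/-!
`Kh_G φ` holds at `s` exactly when `[s]_G` lies in the attractor of the classes included in
`⟦φ⟧`: the least family of classes containing those, and every class on which some action of
`A*_G` is executable and leads only into the family. A strategy without infinite executions
whose leaves all lie in the attractor has its start in the attractor, by well-founded induction
along its executions. Conversely, from a state of the attractor the group wins by always
playing an action that lowers the ordinal rank of the class, which terminates because ordinals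
are well-founded. So if every leaf of a strategy satisfies `Kh_G φ`, its leaves, hence its start,
lie in the attractor of `⟦φ⟧`.
-/

section Forcing

variable {P : Type} {n : ℕ} {M : KhModel P n} {G : Grp n}

theorem gsim_refl (u : M.State) : gsim M G u u := fun i _ => (M.sim_equiv i).refl u

theorem gsim_symm {u v : M.State} (h : gsim M G u v) : gsim M G v u :=
  fun i hi => (M.sim_equiv i).symm (h i hi)

theorem gsim_trans {u v w : M.State} (h₁ : gsim M G u v) (h₂ : gsim M G v w) :
    gsim M G u w :=
  fun i hi => (M.sim_equiv i).trans (h₁ i hi) (h₂ i hi)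

theorem mem_CELeaf_of_gsim {σ : Strategy M G} {s t v : M.State} (ht : t ∈ CELeaf σ s)
    (htv : gsim M G t v) : v ∈ CELeaf σ s := by
  obtain ⟨m, f, h0, hf, hnone, hmt⟩ := ht
  exact ⟨m, f, h0, hf, hnone, gsim_trans hmt htv⟩

variable (M G) in
/-- `Forces M G φ α u`: from `[u]_G` the group `G` can force reaching a class on which `φ`
holds in fewer than `α` rounds. One bound `β` serves all successors, as `Forces` is monotone
in `α`. -/
inductive Forces (φ : Formula P n) : Ordinal.{0} → M.State → Prop
  | leaf {α u} : (∀ v, gsim M G u v → Sat M v φ) → Forces φ α u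
  | step {α u} (d : DAct M.Act) (β : Ordinal.{0}) : β < α → star M.A G d →
      (∀ v, gsim M G u v → ∃ w, dtr M.tr d v w) →
      (∀ v w, gsim M G u v → dtr M.tr d v w → Forces φ β w) → Forces φ α u

variable {φ : Formula P n}

theorem Forces.congr {α : Ordinal.{0}} {u v : M.State} (h : Forces M G φ α u)
    (huv : gsim M G u v) : Forces M G φ α v := by
  cases h with
  | leaf h => exact .leaf fun w hw => h w (gsim_trans huv hw)
  | step d β hβ hd hex hsucc =>
    exact .step d β hβ hd (fun w hw => hex w (gsim_trans huv hw))
      fun a b ha hb => hsucc a b (gsim_trans huv ha) hb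

theorem Forces.mono {α α' : Ordinal.{0}} {u : M.State} (h : Forces M G φ α u) (hα : α ≤ α') :
    Forces M G φ α' u := by
  cases h with
  | leaf h => exact .leaf h
  | step d β hβ hd hex hsucc => exact .step d β (hβ.trans_le hα) hd hex hsucc

variable (M G φ) in
def Forceable (u : M.State) : Prop := ∃ α, Forces M G φ α u

variable (M G φ) in
noncomputable def forceRank (u : M.State) : Ordinal.{0} := sInf {α | Forces M G φ α u}

theorem Forceable.congr {u v : M.State} (h : Forceable M G φ u) (huv : gsim M G u v) :
    Forceable M G φ v :=
  h.imp fun _ hα => hα.congr huv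

theorem forceRank_congr {u v : M.State} (huv : gsim M G u v) :
    forceRank M G φ u = forceRank M G φ v :=
  congrArg sInf (Set.ext fun _ => ⟨(·.congr huv), (·.congr (gsim_symm huv))⟩)

theorem Forceable.forces_forceRank {u : M.State} (h : Forceable M G φ u) :
    Forces M G φ (forceRank M G φ u) u :=
  csInf_mem h

theorem forceRank_le {α : Ordinal.{0}} {u : M.State} (h : Forces M G φ α u) :
    forceRank M G φ u ≤ α :=
  csInf_le' h

theorem forceable_of_forall_successors {u : M.State} {d : DAct M.Act} (hd : star M.A G d)
    (hex : ∀ v, gsim M G u v → ∃ w, dtr M.tr d v w)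
    (hsucc : ∀ v w, gsim M G u v → dtr M.tr d v w → Forceable M G φ w) :
    Forceable M G φ u := by
  let rank : {w // ∃ v, gsim M G u v ∧ dtr M.tr d v w} → Ordinal.{0} :=
    fun w => forceRank M G φ w.1
  refine ⟨Order.succ (⨆ w, rank w), .step d _ (Order.lt_succ _) hd hex fun v w hv hw => ?_⟩
  exact (hsucc v w hv hw).forces_forceRank.mono (Ordinal.le_iSup rank ⟨w, v, hv, hw⟩)

variable (M G φ) in
def GoodMove (u : M.State) (d : DAct M.Act) : Prop :=
  star M.A G d ∧ (∀ v, gsim M G u v → ∃ w, dtr M.tr d v w) ∧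
    ∀ v w, gsim M G u v → dtr M.tr d v w →
      Forceable M G φ w ∧ forceRank M G φ w < forceRank M G φ u

theorem goodMove_congr {u v : M.State} (huv : gsim M G u v) :
    GoodMove M G φ u = GoodMove M G φ v := by
  have hsim : ∀ w, gsim M G u w ↔ gsim M G v w :=
    fun w => ⟨gsim_trans (gsim_symm huv), gsim_trans huv⟩
  funext d
  simp only [GoodMove, hsim, forceRank_congr huv]

theorem Forceable.exists_goodMove {u : M.State} (h : Forceable M G φ u)
    (hu : ¬ ∀ v, gsim M G u v → Sat M v φ) : ∃ d, GoodMove M G φ u d := by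
  cases h.forces_forceRank with
  | leaf h => exact absurd h hu
  | step d β hβ hd hex hsucc =>
    exact ⟨d, hd, hex, fun v w hv hw =>
      ⟨⟨β, hsucc v w hv hw⟩, (forceRank_le (hsucc v w hv hw)).trans_lt hβ⟩⟩

variable (M G φ) in
open Classical in
noncomputable def rankStrategy : Strategy M G where
  act u := if h : ∃ d, GoodMove M G φ u d then some h.choose else none
  uniform u v huv := by rw [goodMove_congr huv]
  mem_star u d hd := by
    split_ifs at hd with h
    exact Option.some_injective _ hd ▸ h.choose_spec.1
  exec u d hd v huv := by
    split_ifs at hd with h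
    exact Option.some_injective _ hd ▸ h.choose_spec.2.1 v huv

theorem rankStrategy_act_eq_some {u : M.State} {d : DAct M.Act}
    (hd : (rankStrategy M G φ).act u = some d) : GoodMove M G φ u d := by
  simp only [rankStrategy] at hd
  split_ifs at hd with h
  exact Option.some_injective _ hd ▸ h.choose_spec

theorem rankStrategy_act_eq_none {u : M.State} (hu : (rankStrategy M G φ).act u = none) :
    ¬ ∃ d, GoodMove M G φ u d := by
  simp only [rankStrategy] at hu
  split_ifs at hu with h
  exact h

theorem forceRank_lt_of_stepRel {u w : M.State} (h : stepRel (rankStrategy M G φ) u w) :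
    Forceable M G φ w ∧ forceRank M G φ w < forceRank M G φ u := by
  obtain ⟨d, hd, v, w', huv, hww', hvw'⟩ := h
  obtain ⟨hforce, hlt⟩ := (rankStrategy_act_eq_some hd).2.2 v w' huv hvw'
  exact ⟨hforce.congr (gsim_symm hww'), forceRank_congr hww' ▸ hlt⟩

theorem sat_Kh_of_forceable {s : M.State} (hs : Forceable M G φ s) :
    Sat M s (.Kh G φ) := by
  refine ⟨rankStrategy M G φ, ?_, ?_⟩
  · rintro t ⟨m, f, h0, hf, hnone, hmt⟩
    have hforce : Forceable M G φ (f m) := by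
      cases m with
      | zero => exact hs.congr h0
      | succ k => exact (forceRank_lt_of_stepRel (hf k k.lt_succ_self)).1
    by_contra ht
    refine rankStrategy_act_eq_none hnone (hforce.exists_goodMove fun hφ => ?_)
    exact ht (hφ t hmt)
  · rintro ⟨f, -, hf⟩
    obtain ⟨j, hj⟩ := WellFounded.not_rel_apply_succ (r := (· < ·))
      fun j => forceRank M G φ (f j)
    exact hj (forceRank_lt_of_stepRel (hf j)).2

variable (σ : Strategy M G) (s : M.State)

def Reaches (u : M.State) : Prop :=
  ∃ (m : ℕ) (f : ℕ → M.State), gsim M G s (f 0) ∧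
    (∀ j < m, stepRel σ (f j) (f (j + 1))) ∧ f m = u

variable {σ s}

theorem Reaches.step {u w : M.State} (hu : Reaches σ s u) (huw : stepRel σ u w) :
    Reaches σ s w := by
  obtain ⟨m, f, h0, hf, rfl⟩ := hu
  refine ⟨m + 1, fun j => if j ≤ m then f j else w, by simpa using h0, fun j hj => ?_,
    by simp⟩
  rcases Nat.lt_or_ge j m with hjm | hjm
  · simpa [hjm.le, Nat.succ_le_of_lt hjm] using hf j hjm
  · obtain rfl : j = m := by omega
    simpa using huw

theorem Reaches.mem_CELeaf {u : M.State} (hu : Reaches σ s u) (hnone : σ.act u = none) :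
    u ∈ CELeaf σ s := by
  obtain ⟨m, f, h0, hf, rfl⟩ := hu
  exact ⟨m, f, h0, hf, hnone, gsim_refl _⟩

theorem acc_stepRel_of_not_infiniteFrom (hfin : ¬ InfiniteFrom σ s) :
    Acc (flip (stepRel σ)) s := by
  by_contra hacc
  obtain ⟨f, rfl, hf⟩ := not_acc_iff_exists_descending_chain.mp hacc
  exact hfin ⟨f, gsim_refl _, hf⟩

theorem forceable_of_strategy (hfin : ¬ InfiniteFrom σ s)
    (hleaf : ∀ t ∈ CELeaf σ s, Forceable M G φ t) : Forceable M G φ s := by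
  suffices ∀ u, Acc (flip (stepRel σ)) u → Reaches σ s u → Forceable M G φ u from
    this s (acc_stepRel_of_not_infiniteFrom hfin) ⟨0, fun _ => s, gsim_refl s, nofun, rfl⟩
  intro u hacc hu
  induction hacc with
  | intro u _ ih =>
    cases hact : σ.act u with
    | none => exact hleaf u (hu.mem_CELeaf hact)
    | some d =>
      refine forceable_of_forall_successors (σ.mem_star u d hact) (σ.exec u d hact)
        fun v w hv hw => ?_
      have hstep : stepRel σ u w := ⟨d, hact, v, w, hv, gsim_refl w, hw⟩
      exact ih w hstep (hu.step hstep)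

theorem sat_Kh_iff_forceable {u : M.State} : Sat M u (.Kh G φ) ↔ Forceable M G φ u := by
  refine ⟨fun ⟨σ, hleaf, hfin⟩ => forceable_of_strategy hfin fun t ht => ?_,
    sat_Kh_of_forceable⟩
  exact ⟨0, .leaf fun v hv => hleaf v (mem_CELeaf_of_gsim ht hv)⟩

end Forcing

/-- Validity of AxKhKh: if M,s ⊨ Kh_G Kh_G φ then M,s ⊨ Kh_G φ. -/
theorem valid_AxKhKh {P : Type} [Countable P] {n : ℕ}
    (M : KhModel P n) (s : M.State) (G : Grp n) (φ : Formula P n)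
    (h : Sat M s (Formula.Kh G (Formula.Kh G φ))) :
    Sat M s (Formula.Kh G φ) := by
  obtain ⟨σ, hleaf, hfin⟩ := h
  exact sat_Kh_iff_forceable.mpr
    (forceable_of_strategy hfin fun t ht => sat_Kh_iff_forceable.mp (hleaf t ht))

end DKH
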